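/- arXiv:2211.16297 — 5 statements merged into one kernel-verified Lean document; each statement's English description precedes it below -/
import Mathlib

section
/- Let y = (m, E, C) be a state with C_i ≥ 0 for all i, ρ(y) = Σ_i W_i C_i > 0, and Z(y) > 0. Let ΔF = (ΔF_m, ΔF_E, ΔF_C) ∈ ℝ^d × ℝ × ℝ^{n_s} with ΔF_C = 0. Set b = −ρ(y)·ΔF_E + ⟨m, ΔF_m⟩ and g = −‖ΔF_m‖²/2, define α_T = (−b + √(b² − 4·Z(y)·g))/(2·Z(y)) if b² − 4·Z(y)·g ≥ 0 and α_T = 0 otherwise, and set α* = max{α_T, 0}. Then for every real α > α*, the state ỹ = y − α⁻¹·ΔF satisfies: its concentration components equal C (hence are all ≥ 0), ρ(ỹ) = ρ(y) > 0, and Z(ỹ) > 0. -/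
open Finset

/-- The density `ρ(y) = ∑ᵢ Wᵢ Cᵢ` of a state. -/
noncomputable def density (ns : ℕ) (W : Fin ns → ℝ) (C : Fin ns → ℝ) : ℝ :=
  ∑ i, W i * C i

/-- `Z(y) = ρ(y)·E − ‖m‖²/2 − ρ(y)·∑ᵢ Wᵢ Cᵢ bᵢ`, the density-scaled shifted
internal energy `ρ²u*`. -/
noncomputable def Zfun (d ns : ℕ) (W : Fin ns → ℝ) (b0 : Fin ns → ℝ)
    (m : Fin d → ℝ) (E : ℝ) (C : Fin ns → ℝ) : ℝ :=
  density ns W C * E - (∑ k, m k ^ 2) / 2 - density ns W C * ∑ i, W i * C i * b0 i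

/-- Lemma B.1: for `α > α*`, the state `ỹ = y − α⁻¹·ΔF` keeps the same
concentrations and density and satisfies `Z(ỹ) > 0`. -/
theorem positivity_preserving_perturbation
    (d ns : ℕ) (hd : 1 ≤ d) (hns : 1 ≤ ns)
    (W : Fin ns → ℝ) (hW : ∀ i, 0 < W i) (b0 : Fin ns → ℝ)
    (m : Fin d → ℝ) (E : ℝ) (C : Fin ns → ℝ)
    (hC : ∀ i, 0 ≤ C i)
    (hρ : 0 < density ns W C)
    (hZ : 0 < Zfun d ns W b0 m E C)
    (ΔFm : Fin d → ℝ) (ΔFE : ℝ) (ΔFC : Fin ns → ℝ)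
    (hΔFC : ΔFC = 0)
    (b g αT αstar : ℝ)
    (hb : b = -(density ns W C) * ΔFE + ∑ k, m k * ΔFm k)
    (hg : g = -(∑ k, ΔFm k ^ 2) / 2)
    (hαT : αT = if 0 ≤ b ^ 2 - 4 * Zfun d ns W b0 m E C * g then
        (-b + Real.sqrt (b ^ 2 - 4 * Zfun d ns W b0 m E C * g)) /
          (2 * Zfun d ns W b0 m E C)
      else 0)
    (hαstar : αstar = max αT 0)
    (α : ℝ) (hα : αstar < α) :
    (∀ i, C i - α⁻¹ * ΔFC i = C i) ∧
    density ns W (fun i => C i - α⁻¹ * ΔFC i) = density ns W C ∧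
    0 < density ns W (fun i => C i - α⁻¹ * ΔFC i) ∧
    0 < Zfun d ns W b0 (fun k => m k - α⁻¹ * ΔFm k) (E - α⁻¹ * ΔFE)
        (fun i => C i - α⁻¹ * ΔFC i) := by
  subst hΔFC
  have hCeq : ∀ i, C i - α⁻¹ * (0 : Fin ns → ℝ) i = C i := by
    intro i; simp
  have hCfun : (fun i => C i - α⁻¹ * (0 : Fin ns → ℝ) i) = C := funext hCeq
  set Zv := Zfun d ns W b0 m E C with hZv
  have hg0 : g ≤ 0 := by
    rw [hg]
    have : (0:ℝ) ≤ ∑ k, ΔFm k ^ 2 := Finset.sum_nonneg fun k _ => sq_nonneg _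
    linarith
  have hD : 0 ≤ b ^ 2 - 4 * Zv * g := by
    nlinarith [sq_nonneg b, mul_nonpos_of_nonneg_of_nonpos (le_of_lt hZ) hg0]
  set s := Real.sqrt (b ^ 2 - 4 * Zv * g) with hs
  have hs0 : 0 ≤ s := Real.sqrt_nonneg _
  have hs2 : s ^ 2 = b ^ 2 - 4 * Zv * g := Real.sq_sqrt hD
  have hαT' : αT = (-b + s) / (2 * Zv) := by rw [hαT, if_pos hD]
  have hαpos : 0 < α := lt_of_le_of_lt (le_max_right αT 0) (hαstar ▸ hα)
  have hαgtT : αT < α := lt_of_le_of_lt (le_max_left αT 0) (hαstar ▸ hα)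
  have hZne : (2 * Zv) ≠ 0 := by positivity
  have hfac : Zv * α ^ 2 + b * α + g
      = Zv * ((α - (-b + s) / (2 * Zv)) * (α - (-b - s) / (2 * Zv))) := by
    field_simp
    nlinarith [hs2]
  have hr1 : 0 < α - (-b + s) / (2 * Zv) := by
    rw [← hαT']; linarith
  have hr2 : 0 < α - (-b - s) / (2 * Zv) := by
    have h2 : (-b - s) / (2 * Zv) ≤ (-b + s) / (2 * Zv) := by
      gcongr
      linarith
    linarith
  have hquad : 0 < Zv * α ^ 2 + b * α + g := by
    rw [hfac]; exact mul_pos hZ (mul_pos hr1 hr2)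
  have hkey : Zfun d ns W b0 (fun k => m k - α⁻¹ * ΔFm k) (E - α⁻¹ * ΔFE)
      (fun i => C i - α⁻¹ * (0 : Fin ns → ℝ) i)
      = Zv + α⁻¹ * b + α⁻¹ ^ 2 * g := by
    rw [hCfun]
    simp only [Zfun, hb, hg, ← hZv]
    have h1 : ∑ k, (m k - α⁻¹ * ΔFm k) ^ 2
        = ∑ k, m k ^ 2 - 2 * α⁻¹ * ∑ k, m k * ΔFm k + α⁻¹ ^ 2 * ∑ k, ΔFm k ^ 2 := by
      rw [Finset.mul_sum, Finset.mul_sum, ← Finset.sum_sub_distrib, ← Finset.sum_add_distrib]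
      exact Finset.sum_congr rfl fun k _ => by ring
    rw [hZv]
    simp only [Zfun, h1]
    ring
  refine ⟨hCeq, by rw [hCfun], by rw [hCfun]; exact hρ, ?_⟩
  rw [hkey]
  have heq : Zv + α⁻¹ * b + α⁻¹ ^ 2 * g = (Zv * α ^ 2 + b * α + g) * (α⁻¹ ^ 2) := by
    field_simp
  rw [heq]
  exact mul_pos hquad (by positivity)
end

section
/- The set G = { y = (m, E, C) ∈ ℝ^d × ℝ × ℝ^{n_s} : C_i ≥ 0 for all i, ρ(y) > 0, and E − ‖m‖²/(2·ρ(y)) − Σ_{i=1}^{n_s} W_i C_i b_i > 0 } is a convex subset of ℝ^d × ℝ × ℝ^{n_s}. -/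
open Finset

lemma key_ineq (a b p q u v : ℝ) (ha : 0 ≤ a) (hb : 0 ≤ b)
    (hp : 0 < p) (hq : 0 < q) (hpos : 0 < a * p + b * q) :
    (a * u + b * v) ^ 2 / (a * p + b * q) ≤ a * (u ^ 2 / p) + b * (v ^ 2 / q) := by
  have h : a * (u ^ 2 / p) + b * (v ^ 2 / q) = (a * u ^ 2 * q + b * v ^ 2 * p) / (p * q) := by
    field_simp
  rw [h, div_le_div_iff₀ hpos (mul_pos hp hq)]
  nlinarith [mul_nonneg (mul_nonneg ha hb) (sq_nonneg (u * q - v * p))]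

/-- The admissible set (without the entropy constraint)
`G = { (m, E, C) : Cᵢ ≥ 0, ρ > 0, E − ‖m‖²/(2ρ) − ∑ᵢ Wᵢ Cᵢ bᵢ > 0 }`
is convex. -/
theorem admissible_set_convex
    (d ns : ℕ) (hd : 1 ≤ d) (hns : 1 ≤ ns)
    (W : Fin ns → ℝ) (hW : ∀ i, 0 < W i) (b0 : Fin ns → ℝ) :
    Convex ℝ {y : (Fin d → ℝ) × ℝ × (Fin ns → ℝ) |
      (∀ i, 0 ≤ y.2.2 i) ∧
      0 < ∑ i, W i * y.2.2 i ∧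
      0 < y.2.1 - (∑ k, y.1 k ^ 2) / (2 * ∑ i, W i * y.2.2 i)
            - ∑ i, W i * y.2.2 i * b0 i} := by
  rintro ⟨mx, Ex, Cx⟩ ⟨hxC, hxρ, hxE⟩ ⟨my, Ey, Cy⟩ ⟨hyC, hyρ, hyE⟩ a b ha hb hab
  have hzcomp : ∀ i, (a • (mx, Ex, Cx) + b • (my, Ey, Cy) :
      (Fin d → ℝ) × ℝ × (Fin ns → ℝ)).2.2 i = a * Cx i + b * Cy i := fun i => rfl
  set ρx := ∑ i, W i * Cx i with hρx
  set ρy := ∑ i, W i * Cy i with hρy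
  have hzρ : (∑ i, W i * (a * Cx i + b * Cy i)) = a * ρx + b * ρy := by
    rw [hρx, hρy, mul_sum, mul_sum, ← sum_add_distrib]
    exact sum_congr rfl fun i _ => by ring
  have hρzpos : 0 < a * ρx + b * ρy := by
    rcases ha.lt_or_eq with h | h
    · have := mul_nonneg hb hyρ.le
      nlinarith [mul_pos h hxρ]
    · have hb1 : b = 1 := by linarith
      simp [← h, hb1, hyρ]
  refine ⟨fun i => ?_, ?_, ?_⟩
  · rw [hzcomp]
    exact add_nonneg (mul_nonneg ha (hxC i)) (mul_nonneg hb (hyC i))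
  · simp only [hzcomp]
    simpa [hzρ] using hρzpos
  · simp only [Set.mem_setOf_eq] at *
    show 0 < a * Ex + b * Ey
        - (∑ k, (a * mx k + b * my k) ^ 2) / (2 * ∑ i, W i * (a * Cx i + b * Cy i))
        - ∑ i, W i * (a * Cx i + b * Cy i) * b0 i
    rw [hzρ]
    have hKE : (∑ k, (a * mx k + b * my k) ^ 2) / (2 * (a * ρx + b * ρy))
        ≤ a * ((∑ k, mx k ^ 2) / (2 * ρx)) + b * ((∑ k, my k ^ 2) / (2 * ρy)) := by
      have h2 : (2 : ℝ) * (a * ρx + b * ρy) = a * (2 * ρx) + b * (2 * ρy) := by ring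
      rw [h2, sum_div]
      have : ∀ k : Fin d, (a * mx k + b * my k) ^ 2 / (a * (2 * ρx) + b * (2 * ρy))
          ≤ a * (mx k ^ 2 / (2 * ρx)) + b * (my k ^ 2 / (2 * ρy)) := fun k =>
        key_ineq a b (2 * ρx) (2 * ρy) (mx k) (my k) ha hb (by linarith) (by linarith)
          (by rw [← h2]; linarith)
      calc ∑ k, (a * mx k + b * my k) ^ 2 / (a * (2 * ρx) + b * (2 * ρy))
          ≤ ∑ k, (a * (mx k ^ 2 / (2 * ρx)) + b * (my k ^ 2 / (2 * ρy))) :=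
            sum_le_sum fun k _ => this k
        _ = a * ((∑ k, mx k ^ 2) / (2 * ρx)) + b * ((∑ k, my k ^ 2) / (2 * ρy)) := by
            rw [sum_add_distrib, ← mul_sum, ← mul_sum, sum_div, sum_div, mul_sum, mul_sum]
    have hb0 : (∑ i, W i * (a * Cx i + b * Cy i) * b0 i)
        = a * (∑ i, W i * Cx i * b0 i) + b * (∑ i, W i * Cy i * b0 i) := by
      rw [mul_sum, mul_sum, ← sum_add_distrib]
      exact sum_congr rfl fun i _ => by ring
    rw [hb0]
    rcases ha.lt_or_eq with hapos | haz
    · have h1 : 0 < a * Ex - a * ((∑ k, mx k ^ 2) / (2 * ρx)) - a * ∑ i, W i * Cx i * b0 i := by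
        nlinarith [mul_pos hapos hxE]
      have h2 : 0 ≤ b * Ey - b * ((∑ k, my k ^ 2) / (2 * ρy)) - b * ∑ i, W i * Cy i * b0 i := by
        nlinarith [mul_nonneg hb hyE.le]
      linarith [hKE, h1, h2]
    · have h1 : 0 ≤ a * Ex - a * ((∑ k, mx k ^ 2) / (2 * ρx)) - a * ∑ i, W i * Cx i * b0 i := by
        nlinarith [mul_nonneg ha hxE.le]
      have hb1 : b = 1 := by linarith
      have h2 : 0 < b * Ey - b * ((∑ k, my k ^ 2) / (2 * ρy)) - b * ∑ i, W i * Cy i * b0 i := by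
        rw [hb1]; simpa using hyE
      linarith [hKE, h1, h2]
end

section
/- Let 𝒢 ⊆ ℝ^M be a convex set and F a conservative numerical flux that is invariant-region-preserving for 𝒢 with wave-speed bound λ > 0. Fix integers n_f ≥ 1, N ≥ 1, n_q ≥ 1 and data: surface weights ν_{f,l} ≥ 0 and unit normals n_{f,l} ∈ ℝ^d for f = 1,…,n_f and l = 1,…,N; interior surface states y_{f,l} ∈ 𝒢 and exterior surface states y⁻_{f,l} ∈ 𝒢 for all f, l; volume states y_v ∈ 𝒢 for v = 1,…,n_q; coefficients θ_v ≥ 0 and θ_{f,l} > 0 with Σ_v θ_v + Σ_{f,l} θ_{f,l} = 1; and reals |κ| > 0, Δt > 0. Set A_f = Σ_{l=1}^{N} ν_{f,l} and |∂κ| = Σ_{f=1}^{n_f} A_f, assume |∂κ| > 0, and assume the closure condition Σ_{f=1}^{n_f} Σ_{l=1}^{N} ν_{f,l}·F(a, a, n_{f,l}) = 0 for every a ∈ ℝ^M. Define ȳ = Σ_v θ_v·y_v + Σ_{f,l} θ_{f,l}·y_{f,l} and ȳ′ = ȳ − (Δt/|κ|)·Σ_{f,l} ν_{f,l}·F(y_{f,l},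 y⁻_{f,l}, n_{f,l}). If Δt·λ/|κ| ≤ (1/2)·min{L_A, L_B, L_C}, where L_A = min{ θ_{f,l}/ν_{f,l} : 1 ≤ f ≤ n_f − 1, 1 ≤ l ≤ N, ν_{f,l} > 0 }, L_B = min{ (θ_{n_f,l}/ν_{f,l})·(A_f/|∂κ|) : 1 ≤ f ≤ n_f, 1 ≤ l ≤ N − 1, ν_{f,l} > 0 }, and L_C = θ_{n_f,N}/|∂κ| (minima over empty index sets are ignored), then ȳ′ ∈ 𝒢. -/
/-!
Split each surface flux `ν F(y_{f,l}, y⁻_{f,l}, n)` into a telescoping chain along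
`y_{f,l} → y_{L,l} → y_{L,lL}`, where `L` is the last face and `lL` the last point. The mass
`θ_{f,l}` of a point off the last face carries the first link, the mass of `(L, l)` is spread over
the faces in proportion to their areas and carries the second, and the mass of `(L, lL)` is spread
in proportion to `ν` and carries the third. By conservativity every link is a three-point update
as in the invariant-region property, with a step admissible exactly under the bounds `L_A`, `L_B`,
`L_C`; what is left at the end of the chains, `Σ ν F(y_{L,lL}, y_{L,lL}, n)`, vanishes by the
closure condition. So `ȳ'` is a convex combination of volume states and admissible updates.
-/

open Finset

section ThreePointUpdate

variable {E V : Type*} [AddCommGroup E] [Module ℝ E] [InvolutiveNeg V]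

def threePointUpdate (F : E → E → V → E) (μ : ℝ) (a b c : E) (n : V) : E :=
  a - μ • (F a b n + F a c (-n))

def PreservesInvariantRegion (F : E → E → V → E) (G : Set E) (S : Set V) (lam : ℝ) : Prop :=
  ∀ a ∈ G, ∀ b ∈ G, ∀ c ∈ G, ∀ n ∈ S, ∀ μ : ℝ, 0 ≤ μ → μ * lam ≤ 1 / 2 →
    threePointUpdate F μ a b c n ∈ G

theorem PreservesInvariantRegion.threePointUpdate_div_mem {F : E → E → V → E} {G : Set E}
    {S : Set V} {lam : ℝ} (hF : PreservesInvariantRegion F G S lam) {a b c : E} (ha : a ∈ G)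
    (hb : b ∈ G) (hc : c ∈ G) {n : V} (hn : n ∈ S) {s w : ℝ} (hs : 0 ≤ s) (hw : 0 ≤ w)
    (hcfl : 0 < w → s * lam ≤ w / 2) :
    threePointUpdate F (s / w) a b c n ∈ G := by
  refine hF a ha b hb c hc n hn _ (div_nonneg hs hw) ?_
  rcases hw.eq_or_lt with rfl | hw
  · norm_num
  · rw [div_mul_eq_mul_div, div_le_iff₀ hw]
    linarith [hcfl hw]

theorem smul_threePointUpdate_div {F : E → E → V → E} (hcons : ∀ a b n, F a b n = -(F b a (-n)))
    {s w : ℝ} (hsw : w = 0 → s = 0) (a b c : E) (n : V) :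
    w • threePointUpdate F (s / w) a b c n = w • a - s • F a b n + s • F c a n := by
  rcases eq_or_ne w 0 with hw | hw
  · simp [hw, hsw hw]
  · rw [threePointUpdate, smul_sub, smul_smul, mul_div_cancel₀ s hw, hcons a c, neg_neg]
    module

end ThreePointUpdate

theorem mul_mul_le_half_of_le_half_mul_div {c ν lam w : ℝ} (hν : 0 ≤ ν) (hw : 0 ≤ w)
    (h : 0 < ν → c * lam ≤ 1 / 2 * (w / ν)) : c * ν * lam ≤ w / 2 := by
  rcases hν.eq_or_lt with rfl | hν
  · linarith
  · calc c * ν * lam = c * lam * ν := by ring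
      _ ≤ 1 / 2 * (w / ν) * ν := mul_le_mul_of_nonneg_right (h hν) hν.le
      _ = w / 2 := by field_simp

theorem Fin.val_lt_sub_one_of_ne {n : ℕ} {i j : Fin n} (hj : (j : ℕ) = n - 1) (h : i ≠ j) :
    (i : ℕ) < n - 1 := by
  have := Fin.val_injective.ne h
  omega

theorem Fintype.sum_ite_eq_zero_else {α M : Type*} [Fintype α] [DecidableEq α] [AddCommGroup M]
    (b : α) (g : α → M) : ∑ a, (if a = b then 0 else g a) = ∑ a, g a - g b := by
  rw [← sum_erase_eq_sub (mem_univ b), sum_ite, sum_const_zero, zero_add, filter_ne']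

theorem Convex.sum_add_sum_sum_three_mem {E ι κ τ : Type*} [AddCommGroup E] [Module ℝ E]
    [Fintype ι] [Fintype κ] [Fintype τ] {G : Set E} (hG : Convex ℝ G)
    {w : ι → ℝ} {p : ι → E} {u v x : κ → τ → ℝ} {P Q R : κ → τ → E}
    (hw : ∀ i, 0 ≤ w i) (hu : ∀ j k, 0 ≤ u j k) (hv : ∀ j k, 0 ≤ v j k) (hx : ∀ j k, 0 ≤ x j k)
    (hsum : ∑ i, w i + ∑ j, ∑ k, (u j k + v j k + x j k) = 1)
    (hp : ∀ i, p i ∈ G) (hP : ∀ j k, P j k ∈ G) (hQ : ∀ j k, Q j k ∈ G) (hR : ∀ j k, R j k ∈ G) :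
    ∑ i, w i • p i + ∑ j, ∑ k, (u j k • P j k + v j k • Q j k + x j k • R j k) ∈ G := by
  let W : ι ⊕ (κ × τ) ⊕ (κ × τ) ⊕ (κ × τ) → ℝ :=
    Sum.elim w (Sum.elim (fun q ↦ u q.1 q.2) (Sum.elim (fun q ↦ v q.1 q.2) fun q ↦ x q.1 q.2))
  let Z : ι ⊕ (κ × τ) ⊕ (κ × τ) ⊕ (κ × τ) → E :=
    Sum.elim p (Sum.elim (fun q ↦ P q.1 q.2) (Sum.elim (fun q ↦ Q q.1 q.2) fun q ↦ R q.1 q.2))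
  have key := hG.sum_mem (t := univ) (w := W) (z := Z)
    (by rintro (i | q | q | q) - <;> simp [W, hw, hu, hv, hx])
    (by simpa [W, Fintype.sum_sum_type, Fintype.sum_prod_type, sum_add_distrib, add_assoc]
      using hsum)
    (by rintro (i | q | q | q) - <;> simp [Z, hp, hP, hQ, hR])
  simpa [W, Z, Fintype.sum_sum_type, Fintype.sum_prod_type, sum_add_distrib, add_assoc] using key

noncomputable section Redistribution

variable {nf N : ℕ} (ν θ : Fin nf → Fin N → ℝ) (L : Fin nf) (lL : Fin N)

def weightA (f : Fin nf) (l : Fin N) : ℝ :=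
  if f = L then 0 else θ f l

def weightB (f : Fin nf) (l : Fin N) : ℝ :=
  if l = lL then 0 else θ L l * (∑ l', ν f l') / ∑ f', ∑ l', ν f' l'

def weightC (f : Fin nf) (l : Fin N) : ℝ :=
  θ L lL * ν f l / ∑ f', ∑ l', ν f' l'

variable {ν θ L lL}

theorem weightA_nonneg (hθ : ∀ f l, 0 ≤ θ f l) (f : Fin nf) (l : Fin N) :
    0 ≤ weightA θ L f l := by
  unfold weightA; split_ifs
  exacts [le_rfl, hθ f l]

theorem weightB_nonneg (hν : ∀ f l, 0 ≤ ν f l) (hθ : ∀ f l, 0 ≤ θ f l) (f : Fin nf) (l : Fin N) :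
    0 ≤ weightB ν θ L lL f l := by
  unfold weightB; split_ifs
  exacts [le_rfl, div_nonneg (mul_nonneg (hθ L l) (sum_nonneg fun l _ ↦ hν f l))
    (sum_nonneg fun f _ ↦ sum_nonneg fun l _ ↦ hν f l)]

theorem weightC_nonneg (hν : ∀ f l, 0 ≤ ν f l) (hθ : ∀ f l, 0 ≤ θ f l) (f : Fin nf) (l : Fin N) :
    0 ≤ weightC ν θ L lL f l :=
  div_nonneg (mul_nonneg (hθ L lL) (hν f l))
    (sum_nonneg fun f _ ↦ sum_nonneg fun l _ ↦ hν f l)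

theorem eq_zero_of_weightB_eq_zero (hν : ∀ f l, 0 ≤ ν f l) (hθ : θ L l ≠ 0)
    (hB : ∑ f, ∑ l, ν f l ≠ 0) (hl : l ≠ lL) (h : weightB ν θ L lL f l = 0) : ν f l = 0 := by
  simp only [weightB, if_neg hl, div_eq_zero_iff, mul_eq_zero, hθ, hB, false_or, or_false] at h
  exact (sum_eq_zero_iff_of_nonneg fun l _ ↦ hν f l).mp h l (mem_univ l)

theorem eq_zero_of_weightC_eq_zero (hθ : θ L lL ≠ 0) (hB : ∑ f, ∑ l, ν f l ≠ 0)
    (h : weightC ν θ L lL f l = 0) : ν f l = 0 := by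
  simpa [weightC, hθ, hB] using h

theorem sum_weight_smul_eq {E : Type*} [AddCommGroup E] [Module ℝ E] (hB : ∑ f, ∑ l, ν f l ≠ 0)
    (y : Fin nf → Fin N → E) :
    ∑ f, ∑ l, (weightA θ L f l • y f l + weightB ν θ L lL f l • y L l +
      weightC ν θ L lL f l • y L lL) = ∑ f, ∑ l, θ f l • y f l := by
  have sumA : ∑ f, ∑ l, weightA θ L f l • y f l = ∑ f, ∑ l, θ f l • y f l - ∑ l, θ L l • y L l := by
    simp only [weightA, ite_smul, zero_smul, sum_ite_irrel, sum_const_zero]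
    exact Fintype.sum_ite_eq_zero_else L _
  have sumB : ∑ f, ∑ l, weightB ν θ L lL f l • y L l = ∑ l, θ L l • y L l - θ L lL • y L lL := by
    rw [sum_comm, ← Fintype.sum_ite_eq_zero_else lL]
    refine sum_congr rfl fun l _ ↦ ?_
    rw [← sum_smul]
    split_ifs with hl
    · simp [weightB, hl]
    · simp only [weightB, if_neg hl, ← sum_div, ← mul_sum, mul_div_assoc, div_self hB, mul_one]
  have sumC : ∑ f, ∑ l, weightC ν θ L lL f l • y L lL = θ L lL • y L lL := by
    simp only [← sum_smul, weightC, ← sum_div, ← mul_sum, mul_div_assoc, div_self hB, mul_one]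
  simp only [sum_add_distrib, sumA, sumB, sumC]
  abel

theorem sum_weight_eq (hB : ∑ f, ∑ l, ν f l ≠ 0) :
    ∑ f, ∑ l, (weightA θ L f l + weightB ν θ L lL f l + weightC ν θ L lL f l) =
      ∑ f, ∑ l, θ f l := by
  simpa using sum_weight_smul_eq (L := L) (lL := lL) hB fun _ _ ↦ (1 : ℝ)

end Redistribution

noncomputable section Stages

variable {E V : Type*} [AddCommGroup E] [Module ℝ E] [InvolutiveNeg V] (F : E → E → V → E)
  {nf N : ℕ} (c : ℝ) (ν θ : Fin nf → Fin N → ℝ) (yin yout : Fin nf → Fin N → E)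
  (nvec : Fin nf → Fin N → V) (L : Fin nf) (lL : Fin N)

/- The state whose flux enters stage `B` (resp. `C`) at `(f, l)`: the previous node of the chain,
or the exterior state when all previous stages are void. -/

def incomingB (f : Fin nf) (l : Fin N) : E :=
  if f = L then yout f l else yin f l

def incomingC (f : Fin nf) (l : Fin N) : E :=
  if l = lL then incomingB yin yout L f l else yin L l

/- Each stage moves the flux `c ν_{f,l}` with step `c ν_{f,l} / w`; where its weight `w` vanishes,
division by zero makes the stage the trivial update of step `0`. -/

def stateA (f : Fin nf) (l : Fin N) : E :=
  threePointUpdate F (c * ν f l / weightA θ L f l) (yin f l) (yout f l) (yin L l) (nvec f l)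

def stateB (f : Fin nf) (l : Fin N) : E :=
  threePointUpdate F (c * ν f l / weightB ν θ L lL f l) (yin L l) (incomingB yin yout L f l)
    (yin L lL) (nvec f l)

def stateC (f : Fin nf) (l : Fin N) : E :=
  threePointUpdate F (c * ν f l / weightC ν θ L lL f l) (yin L lL) (incomingC yin yout L lL f l)
    (yin L lL) (nvec f l)

variable {F c ν θ yin yout nvec L lL}

section Identities

variable (hcons : ∀ a b n, F a b n = -(F b a (-n)))
include hcons

theorem weightA_smul_stateA (hθ : ∀ f l, θ f l ≠ 0) (f : Fin nf) (l : Fin N) :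
    weightA θ L f l • stateA F c ν θ yin yout nvec L f l =
      weightA θ L f l • yin f l - (c * ν f l) • F (yin f l) (yout f l) (nvec f l) +
        (c * ν f l) • F (yin L l) (incomingB yin yout L f l) (nvec f l) := by
  by_cases hf : f = L
  · subst hf
    simp [weightA, incomingB]
  · rw [stateA, smul_threePointUpdate_div hcons fun h ↦
      (hθ f l (by rwa [weightA, if_neg hf] at h)).elim]
    simp [incomingB, hf]

theorem weightB_smul_stateB (hν : ∀ f l, 0 ≤ ν f l) (hθ : ∀ f l, θ f l ≠ 0)
    (hB : ∑ f, ∑ l, ν f l ≠ 0) (f : Fin nf) (l : Fin N) :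
    weightB ν θ L lL f l • stateB F c ν θ yin yout nvec L lL f l =
      weightB ν θ L lL f l • yin L l -
        (c * ν f l) • F (yin L l) (incomingB yin yout L f l) (nvec f l) +
        (c * ν f l) • F (yin L lL) (incomingC yin yout L lL f l) (nvec f l) := by
  by_cases hl : l = lL
  · subst hl
    simp [weightB, incomingC]
  · rw [stateB, smul_threePointUpdate_div hcons fun h ↦ by
      rw [eq_zero_of_weightB_eq_zero hν (hθ L l) hB hl h, mul_zero]]
    simp [incomingC, hl]

theorem weightC_smul_stateC (hθ : ∀ f l, θ f l ≠ 0) (hB : ∑ f, ∑ l, ν f l ≠ 0)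
    (f : Fin nf) (l : Fin N) :
    weightC ν θ L lL f l • stateC F c ν θ yin yout nvec L lL f l =
      weightC ν θ L lL f l • yin L lL -
        (c * ν f l) • F (yin L lL) (incomingC yin yout L lL f l) (nvec f l) +
        (c * ν f l) • F (yin L lL) (yin L lL) (nvec f l) := by
  rw [stateC, smul_threePointUpdate_div hcons fun h ↦ by
    rw [eq_zero_of_weightC_eq_zero (hθ L lL) hB h, mul_zero]]

theorem sum_stages_eq (hν : ∀ f l, 0 ≤ ν f l) (hθ : ∀ f l, θ f l ≠ 0)
    (hB : ∑ f, ∑ l, ν f l ≠ 0) (hclosure : ∀ a, ∑ f, ∑ l, ν f l • F a a (nvec f l) = 0) :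
    ∑ f, ∑ l, (weightA θ L f l • stateA F c ν θ yin yout nvec L f l +
        weightB ν θ L lL f l • stateB F c ν θ yin yout nvec L lL f l +
        weightC ν θ L lL f l • stateC F c ν θ yin yout nvec L lL f l) =
      ∑ f, ∑ l, θ f l • yin f l - c • ∑ f, ∑ l, ν f l • F (yin f l) (yout f l) (nvec f l) := by
  have telescope : ∀ f l, weightA θ L f l • stateA F c ν θ yin yout nvec L f l +
      weightB ν θ L lL f l • stateB F c ν θ yin yout nvec L lL f l +
      weightC ν θ L lL f l • stateC F c ν θ yin yout nvec L lL f l =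
        (weightA θ L f l • yin f l + weightB ν θ L lL f l • yin L l +
          weightC ν θ L lL f l • yin L lL) -
        c • (ν f l • F (yin f l) (yout f l) (nvec f l)) +
        c • (ν f l • F (yin L lL) (yin L lL) (nvec f l)) := by
    intro f l
    rw [weightA_smul_stateA hcons hθ, weightB_smul_stateB hcons hν hθ hB,
      weightC_smul_stateC hcons hθ hB, smul_smul, smul_smul]
    abel
  rw [← sum_weight_smul_eq (L := L) (lL := lL) hB yin]
  simp only [telescope, sum_add_distrib, sum_sub_distrib, ← smul_sum, hclosure, smul_zero,
    add_zero]

end Identities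

end Stages

section Membership

variable {E V : Type*} {nf N : ℕ} {yin yout : Fin nf → Fin N → E} {L : Fin nf} {lL : Fin N}
  {G : Set E}

theorem incomingB_mem (hyin : ∀ f l, yin f l ∈ G) (hyout : ∀ f l, yout f l ∈ G) (f : Fin nf)
    (l : Fin N) : incomingB yin yout L f l ∈ G := by
  unfold incomingB; split_ifs
  exacts [hyout f l, hyin f l]

theorem incomingC_mem (hyin : ∀ f l, yin f l ∈ G) (hyout : ∀ f l, yout f l ∈ G) (f : Fin nf)
    (l : Fin N) : incomingC yin yout L lL f l ∈ G := by
  unfold incomingC; split_ifs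
  exacts [incomingB_mem hyin hyout f l, hyin L l]

variable [AddCommGroup E] [Module ℝ E] [InvolutiveNeg V] {F : E → E → V → E} {c : ℝ}
  {ν θ : Fin nf → Fin N → ℝ} {nvec : Fin nf → Fin N → V} {S : Set V} {lam : ℝ}
  (hF : PreservesInvariantRegion F G S lam) (hc : 0 ≤ c) (hν : ∀ f l, 0 ≤ ν f l)
  (hθ : ∀ f l, 0 < θ f l) (hyin : ∀ f l, yin f l ∈ G) (hyout : ∀ f l, yout f l ∈ G)
  (hnvec : ∀ f l, nvec f l ∈ S)
include hF hc hν hθ hyin hyout hnvec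

theorem stateA_mem (hcfl : ∀ f l, f ≠ L → 0 < ν f l → c * lam ≤ 1 / 2 * (θ f l / ν f l))
    (f : Fin nf) (l : Fin N) : stateA F c ν θ yin yout nvec L f l ∈ G := by
  refine hF.threePointUpdate_div_mem (hyin f l) (hyout f l) (hyin L l) (hnvec f l)
    (mul_nonneg hc (hν f l)) (weightA_nonneg (fun f l ↦ (hθ f l).le) f l) fun hw ↦ ?_
  have hf : f ≠ L := fun hf ↦ by simp [weightA, hf] at hw
  rw [weightA, if_neg hf]
  exact mul_mul_le_half_of_le_half_mul_div (hν f l) (hθ f l).le (hcfl f l hf)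

theorem stateB_mem
    (hcfl : ∀ f l, l ≠ lL → 0 < ν f l →
      c * lam ≤ 1 / 2 * ((θ L l / ν f l) * ((∑ l', ν f l') / ∑ f', ∑ l', ν f' l')))
    (f : Fin nf) (l : Fin N) : stateB F c ν θ yin yout nvec L lL f l ∈ G := by
  refine hF.threePointUpdate_div_mem (hyin L l) (incomingB_mem hyin hyout f l) (hyin L lL)
    (hnvec f l) (mul_nonneg hc (hν f l)) (weightB_nonneg hν (fun f l ↦ (hθ f l).le) f l)
    fun hw ↦ ?_
  have hl : l ≠ lL := fun hl ↦ by simp [weightB, hl] at hw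
  refine mul_mul_le_half_of_le_half_mul_div (hν f l) hw.le fun hpos ↦ ?_
  rw [weightB, if_neg hl]
  convert hcfl f l hl hpos using 2
  ring

theorem stateC_mem (hcfl : c * lam ≤ 1 / 2 * (θ L lL / ∑ f, ∑ l, ν f l)) (f : Fin nf)
    (l : Fin N) : stateC F c ν θ yin yout nvec L lL f l ∈ G := by
  have hw := weightC_nonneg (L := L) (lL := lL) hν (fun f l ↦ (hθ f l).le) f l
  refine hF.threePointUpdate_div_mem (hyin L lL) (incomingC_mem hyin hyout f l) (hyin L lL)
    (hnvec f l) (mul_nonneg hc (hν f l)) hw fun _ ↦ ?_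
  refine mul_mul_le_half_of_le_half_mul_div (hν f l) hw fun hpos ↦ ?_
  rw [weightC]
  convert hcfl using 2
  field_simp

end Membership

theorem evolved_element_average_in_invariant_set_general
    (M d : ℕ)
    (G : Set (Fin M → ℝ)) (hGconv : Convex ℝ G)
    (F : (Fin M → ℝ) → (Fin M → ℝ) → (Fin d → ℝ) → (Fin M → ℝ))
    (lam : ℝ)
    -- `F` is conservative
    (hcons : ∀ a b n, F a b n = -(F b a (-n)))
    -- `F` is invariant-region-preserving for `G` with wave-speed bound `lam`
    (hIRP : ∀ a ∈ G, ∀ b ∈ G, ∀ c ∈ G, ∀ n : Fin d → ℝ, (∑ k, n k ^ 2) = 1 →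
      ∀ μ : ℝ, 0 ≤ μ → μ * lam ≤ 1 / 2 →
        a - μ • (F a b n + F a c (-n)) ∈ G)
    (nf N nq : ℕ)
    -- surface weights (zero-padded) and unit normals
    (ν : Fin nf → Fin N → ℝ) (hν : ∀ f l, 0 ≤ ν f l)
    (nvec : Fin nf → Fin N → (Fin d → ℝ))
    (hnvec : ∀ f l, (∑ k, nvec f l k ^ 2) = 1)
    -- interior and exterior surface states, and volume states, all in `G`
    (yin yout : Fin nf → Fin N → (Fin M → ℝ))
    (hyin : ∀ f l, yin f l ∈ G) (hyout : ∀ f l, yout f l ∈ G)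
    (yv : Fin nq → (Fin M → ℝ)) (hyv : ∀ v, yv v ∈ G)
    -- convex-combination coefficients
    (θv : Fin nq → ℝ) (hθv : ∀ v, 0 ≤ θv v)
    (θs : Fin nf → Fin N → ℝ) (hθs : ∀ f l, 0 < θs f l)
    (hsum : (∑ v, θv v) + ∑ f, ∑ l, θs f l = 1)
    (κvol Δt : ℝ) (hκ : 0 < κvol) (hΔt : 0 < Δt)
    -- face areas and total boundary area
    (A : Fin nf → ℝ) (hA : ∀ f, A f = ∑ l, ν f l)
    (bdry : ℝ) (hbdry : bdry = ∑ f, A f) (hbdrypos : 0 < bdry)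
    -- closure condition (flux consistency + divergence theorem)
    (hclosure : ∀ a : Fin M → ℝ, (∑ f, ∑ l, ν f l • F a a (nvec f l)) = 0)
    -- the distinguished last face and last surface point
    (lastF : Fin nf) (hlastF : (lastF : ℕ) = nf - 1)
    (lastL : Fin N) (hlastL : (lastL : ℕ) = N - 1)
    -- CFL condition: Δt·λ/|κ| ≤ (1/2)·min{L_A, L_B, L_C}
    (hLA : ∀ (f : Fin nf) (l : Fin N), (f : ℕ) < nf - 1 → 0 < ν f l →
      Δt * lam / κvol ≤ (1 / 2) * (θs f l / ν f l))
    (hLB : ∀ (f : Fin nf) (l : Fin N), (l : ℕ) < N - 1 → 0 < ν f l →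
      Δt * lam / κvol ≤ (1 / 2) * ((θs lastF l / ν f l) * (A f / bdry)))
    (hLC : Δt * lam / κvol ≤ (1 / 2) * (θs lastF lastL / bdry))
    -- the element average and its evolution
    (ybar ybar' : Fin M → ℝ)
    (hybar : ybar = (∑ v, θv v • yv v) + ∑ f, ∑ l, θs f l • yin f l)
    (hybar' : ybar' = ybar - (Δt / κvol) •
      ∑ f, ∑ l, ν f l • F (yin f l) (yout f l) (nvec f l)) :
    ybar' ∈ G := by
  have hF : PreservesInvariantRegion F G {n | ∑ k, n k ^ 2 = 1} lam := hIRP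
  have hc : 0 ≤ Δt / κvol := by positivity
  have hθ : ∀ f l, 0 ≤ θs f l := fun f l ↦ (hθs f l).le
  simp only [hbdry, hA, mul_div_right_comm Δt lam κvol] at hbdrypos hLA hLB hLC
  rw [hybar', hybar, add_sub_assoc, ← sum_stages_eq (F := F) (L := lastF) (lL := lastL) hcons hν
    (fun f l ↦ (hθs f l).ne') hbdrypos.ne' hclosure]
  exact hGconv.sum_add_sum_sum_three_mem hθv (weightA_nonneg hθ) (weightB_nonneg hν hθ)
    (weightC_nonneg hν hθ) (by rw [sum_weight_eq hbdrypos.ne', hsum]) hyv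
    (stateA_mem hF hc hν hθs hyin hyout hnvec fun f l hf ↦
      hLA f l (Fin.val_lt_sub_one_of_ne hlastF hf))
    (stateB_mem hF hc hν hθs hyin hyout hnvec fun f l hl ↦
      hLB f l (Fin.val_lt_sub_one_of_ne hlastL hl))
    (stateC_mem hF hc hν hθs hyin hyout hnvec hLC)

/-- Theorem 1 of the paper: the multidimensional CFL condition guaranteeing
that the evolved element average remains in the convex invariant set `G`. -/
theorem evolved_element_average_in_invariant_set
    (M d : ℕ)
    (G : Set (Fin M → ℝ)) (hGconv : Convex ℝ G)
    (F : (Fin M → ℝ) → (Fin M → ℝ) → (Fin d → ℝ) → (Fin M → ℝ))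
    (lam : ℝ) (hlam : 0 < lam)
    -- `F` is conservative
    (hcons : ∀ a b n, F a b n = -(F b a (-n)))
    -- `F` is invariant-region-preserving for `G` with wave-speed bound `lam`
    (hIRP : ∀ a ∈ G, ∀ b ∈ G, ∀ c ∈ G, ∀ n : Fin d → ℝ, (∑ k, n k ^ 2) = 1 →
      ∀ μ : ℝ, 0 ≤ μ → μ * lam ≤ 1 / 2 →
        a - μ • (F a b n + F a c (-n)) ∈ G)
    (nf N nq : ℕ) (hnf : 1 ≤ nf) (hN : 1 ≤ N) (hnq : 1 ≤ nq)
    -- surface weights (zero-padded) and unit normals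
    (ν : Fin nf → Fin N → ℝ) (hν : ∀ f l, 0 ≤ ν f l)
    (nvec : Fin nf → Fin N → (Fin d → ℝ))
    (hnvec : ∀ f l, (∑ k, nvec f l k ^ 2) = 1)
    -- interior and exterior surface states, and volume states, all in `G`
    (yin yout : Fin nf → Fin N → (Fin M → ℝ))
    (hyin : ∀ f l, yin f l ∈ G) (hyout : ∀ f l, yout f l ∈ G)
    (yv : Fin nq → (Fin M → ℝ)) (hyv : ∀ v, yv v ∈ G)
    -- convex-combination coefficients
    (θv : Fin nq → ℝ) (hθv : ∀ v, 0 ≤ θv v)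
    (θs : Fin nf → Fin N → ℝ) (hθs : ∀ f l, 0 < θs f l)
    (hsum : (∑ v, θv v) + ∑ f, ∑ l, θs f l = 1)
    (κvol Δt : ℝ) (hκ : 0 < κvol) (hΔt : 0 < Δt)
    -- face areas and total boundary area
    (A : Fin nf → ℝ) (hA : ∀ f, A f = ∑ l, ν f l)
    (bdry : ℝ) (hbdry : bdry = ∑ f, A f) (hbdrypos : 0 < bdry)
    -- closure condition (flux consistency + divergence theorem)
    (hclosure : ∀ a : Fin M → ℝ, (∑ f, ∑ l, ν f l • F a a (nvec f l)) = 0)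
    -- the distinguished last face and last surface point
    (lastF : Fin nf) (hlastF : (lastF : ℕ) = nf - 1)
    (lastL : Fin N) (hlastL : (lastL : ℕ) = N - 1)
    -- CFL condition: Δt·λ/|κ| ≤ (1/2)·min{L_A, L_B, L_C}
    (hLA : ∀ (f : Fin nf) (l : Fin N), (f : ℕ) < nf - 1 → 0 < ν f l →
      Δt * lam / κvol ≤ (1 / 2) * (θs f l / ν f l))
    (hLB : ∀ (f : Fin nf) (l : Fin N), (l : ℕ) < N - 1 → 0 < ν f l →
      Δt * lam / κvol ≤ (1 / 2) * ((θs lastF l / ν f l) * (A f / bdry)))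
    (hLC : Δt * lam / κvol ≤ (1 / 2) * (θs lastF lastL / bdry))
    -- the element average and its evolution
    (ybar ybar' : Fin M → ℝ)
    (hybar : ybar = (∑ v, θv v • yv v) + ∑ f, ∑ l, θs f l • yin f l)
    (hybar' : ybar' = ybar - (Δt / κvol) •
      ∑ f, ∑ l, ν f l • F (yin f l) (yout f l) (nvec f l)) :
    ybar' ∈ G :=
  evolved_element_average_in_invariant_set_general M d G hGconv F lam hcons hIRP nf N nq ν hν nvec
    hnvec yin yout hyin hyout yv hyv θv hθv θs hθs hsum κvol Δt hκ hΔt A hA bdry hbdry hbdrypos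
    hclosure lastF hlastF lastL hlastL hLA hLB hLC ybar ybar' hybar hybar'
end

section
/- Let 𝒢 ⊆ ℝ^M be a convex set and F a conservative numerical flux that is invariant-region-preserving for 𝒢 with wave-speed bound λ > 0. Fix integers n_f ≥ 1 and n_q^∂ ≥ 1, n_q ≥ 1, and data: face areas A_f > 0 with |∂κ| = Σ_{f=1}^{n_f} A_f; normalized surface weights ŵ_l > 0 (l = 1,…,n_q^∂) with Σ_l ŵ_l = 1; one unit normal n_f ∈ ℝ^d per face satisfying the closure condition Σ_{f=1}^{n_f} A_f·F(a, a, n_f) = 0 for every a ∈ ℝ^M; interior surface states y_{f,l} ∈ 𝒢 and exterior surface states y⁻_{f,l} ∈ 𝒢; volume states y_v ∈ 𝒢 (v = 1,…,n_q); coefficients θ_v ≥ 0 and θ_{f,l} > 0 with Σ_v θ_v + Σ_{f,l} θ_{f,l} = 1; and reals |κ| > 0, Δt > 0. Define ȳ = Σ_v θ_v·y_v + Σ_{f,l} θ_{f,l}·y_{f,l} and ȳ′ = ȳ − (Δt/|κ|)·Σ_{f=1}^{n_f} Σ_{l=1}^{n_q^∂} A_f·ŵ_l·F(y_{f,l}, y⁻_{f,l},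 n_f). If Δt·λ/|κ| ≤ (1/2)·min{L_A, L_B}, where L_A = min{ θ_{f,l}/(A_f·ŵ_l) : 1 ≤ f ≤ n_f − 1, 1 ≤ l ≤ n_q^∂ } and L_B = min{ θ_{n_f,l}/(|∂κ|·ŵ_l) : 1 ≤ l ≤ n_q^∂ } (minima over empty index sets are ignored), then ȳ′ ∈ 𝒢. -/
open Finset

/-!
Fix a surface quadrature node `l`. On every face `f` other than the last one `L`, pair the
flux through `y_{f,l}` with a fictitious flux from `y_{f,l}` to the last face's state
`y_{L,l}`; this turns the contribution of `(f, l)` into `θ_{f,l}` times a three-point update,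
with step `Δt A_f ŵ_l / (|κ| θ_{f,l})`. By conservativity the fictitious fluxes reappear at
`(L, l)` as `F(y_{L,l}, y_{f,l}, n_f)`. Adding `Σ_f A_f F(y_{L,l}, y_{L,l}, -n_f)`, which vanishes
by the closure condition, turns the contribution of `(L, l)` into `θ_{L,l}` times an
`A_f / |∂κ|`-weighted average of three-point updates with step `Δt |∂κ| ŵ_l / (|κ| θ_{L,l})`;
this is where `|∂κ|` enters `L_B`. Hence `ȳ′` is a convex combination of points of `𝒢`.
-/

theorem Convex.sum_add_sum_mem {E ι κ : Type*} [AddCommGroup E] [Module ℝ E] [Fintype ι]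
    [Fintype κ] {s : Set E} (hs : Convex ℝ s) {a : ι → ℝ} {b : κ → ℝ} {x : ι → E} {z : κ → E}
    (ha : ∀ i, 0 ≤ a i) (hb : ∀ j, 0 ≤ b j) (hab : ∑ i, a i + ∑ j, b j = 1)
    (hx : ∀ i, x i ∈ s) (hz : ∀ j, z j ∈ s) :
    ∑ i, a i • x i + ∑ j, b j • z j ∈ s := by
  simpa only [Fintype.sum_sum_type, Sum.elim_inl, Sum.elim_inr] using
    hs.sum_mem (t := univ) (w := Sum.elim a b) (z := Sum.elim x z)
      (by rintro (i | j) _ <;> simp [ha, hb]) (by simpa [Fintype.sum_sum_type] using hab)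
      (by rintro (i | j) _ <;> simp [hx, hz])

theorem cfl_step_mul_le_half {Δt κ lam θ q : ℝ} (hq : 0 < q) (hθ : 0 < θ)
    (h : Δt * lam / κ ≤ 1 / 2 * (θ / q)) : Δt / κ * q / θ * lam ≤ 1 / 2 :=
  calc Δt / κ * q / θ * lam = Δt * lam / κ * (q / θ) := by ring
    _ ≤ 1 / 2 * (θ / q) * (q / θ) := by gcongr
    _ = 1 / 2 := by field_simp

section Flux

variable {V N : Type*} [AddCommGroup V] [InvolutiveNeg N]

def IsConservative (F : V → V → N → V) : Prop :=
  ∀ a b n, F a b n = -F b a (-n)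

theorem IsConservative.apply_neg {F : V → V → N → V} (hF : IsConservative F) (a b : V) (n : N) :
    F a b (-n) = -F b a n := by
  rw [hF, neg_neg]

variable [Module ℝ V]

/-- `S` is the set of admissible normals (unit vectors, in the application). -/
def IsInvariantRegionPreserving (G : Set V) (F : V → V → N → V) (S : Set N) (lam : ℝ) : Prop :=
  ∀ a ∈ G, ∀ b ∈ G, ∀ c ∈ G, ∀ n ∈ S, ∀ μ : ℝ, 0 ≤ μ → μ * lam ≤ 1 / 2 →
    a - μ • (F a b n + F a c (-n)) ∈ G

variable {G : Set V} {F : V → V → N → V} {S : Set N} {lam : ℝ}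
  {ι : Type*} [Fintype ι]

theorem sub_smul_sum_flux_mem (hG : Convex ℝ G) (hF : IsConservative F)
    (hIRP : IsInvariantRegionPreserving G F S lam) {a : V} (ha : a ∈ G) {b : ι → V}
    (hb : ∀ f, b f ∈ G) {n : ι → N} (hn : ∀ f, n f ∈ S) {p : ι → ℝ} (hp : ∀ f, 0 ≤ p f)
    (hP : 0 < ∑ f, p f) (hclosure : ∑ f, p f • F a a (n f) = 0) {t : ℝ} (ht : 0 ≤ t)
    (hstep : t * (∑ f, p f) * lam ≤ 1 / 2) :
    a - t • ∑ f, p f • F a (b f) (n f) ∈ G := by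
  set P := ∑ f, p f
  have hweights : ∑ f, p f / P = 1 := by rw [← sum_div, div_self hP.ne']
  have hterm : ∀ f, (p f / P) • (a - (t * P) • (F a (b f) (n f) + F a a (-n f))) =
      (p f / P) • a - t • p f • F a (b f) (n f) + t • p f • F a a (n f) := by
    intro f
    rw [hF.apply_neg, smul_sub, smul_smul, smul_smul, smul_smul,
      show p f / P * (t * P) = t * p f by field_simp]
    simp only [smul_add, smul_neg, mul_smul]
    abel
  have hsum : a - t • ∑ f, p f • F a (b f) (n f) =
      ∑ f, (p f / P) • (a - (t * P) • (F a (b f) (n f) + F a a (-n f))) := by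
    simp only [hterm, sum_add_distrib, sum_sub_distrib, ← smul_sum, ← sum_smul, hweights,
      hclosure, one_smul, smul_zero, add_zero]
  rw [hsum]
  exact hG.sum_mem (fun f _ => div_nonneg (hp f) hP.le) hweights
    fun f _ => hIRP a ha _ (hb f) a ha _ (hn f) _ (by positivity) hstep

theorem exists_smul_sum_eq_sum_sub_smul_flux [DecidableEq ι] (hG : Convex ℝ G)
    (hF : IsConservative F) (hIRP : IsInvariantRegionPreserving G F S lam) (L : ι)
    {y y' : ι → V} (hy : ∀ f, y f ∈ G) (hy' : ∀ f, y' f ∈ G) {n : ι → N} (hn : ∀ f, n f ∈ S)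
    {θ p : ι → ℝ} (hθ : ∀ f, 0 < θ f) (hp : ∀ f, 0 ≤ p f) (hP : 0 < ∑ f, p f)
    (hstep : ∀ f ≠ L, p f / θ f * lam ≤ 1 / 2) (hstepL : (∑ f, p f) / θ L * lam ≤ 1 / 2)
    (hclosure : ∑ f, p f • F (y L) (y L) (n f) = 0) :
    ∃ Z : ι → V, (∀ f, Z f ∈ G) ∧
      ∑ f, θ f • Z f = ∑ f, (θ f • y f - p f • F (y f) (y' f) (n f)) := by
  set a := y L
  -- the states seen from `a`: the exterior one across the last face, interior ones elsewhere
  let b : ι → V := fun g => if g = L then y' L else y g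
  have hb : ∀ g, b g ∈ G := fun g => by unfold b; split_ifs <;> simp [hy, hy']
  let Z : ι → V := fun f => if f = L then a - (θ L)⁻¹ • ∑ g, p g • F a (b g) (n g)
    else y f - (p f / θ f) • (F (y f) (y' f) (n f) + F (y f) a (-n f))
  refine ⟨Z, fun f => ?_, ?_⟩
  · by_cases hf : f = L
    · simp only [Z, if_pos hf]
      exact sub_smul_sum_flux_mem hG hF hIRP (hy L) hb hn hp hP hclosure (inv_nonneg.2 (hθ L).le)
        (by rwa [inv_mul_eq_div])
    · simp only [Z, if_neg hf]
      exact hIRP _ (hy f) _ (hy' f) _ (hy L) _ (hn f) _ (div_nonneg (hp f) (hθ f).le) (hstep f hf)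
  · have hZL : θ L • Z L = θ L • a - p L • F a (y' L) (n L) -
        ∑ g ∈ univ.erase L, p g • F a (y g) (n g) := by
      have hsplit : ∑ g, p g • F a (b g) (n g) =
          p L • F a (y' L) (n L) + ∑ g ∈ univ.erase L, p g • F a (y g) (n g) := by
        rw [← add_sum_erase _ _ (mem_univ L)]
        congr 1
        · simp [b]
        · exact sum_congr rfl fun g hg => by simp [b, ne_of_mem_erase hg]
      simp only [Z, if_pos rfl]
      rw [smul_sub, smul_smul, mul_inv_cancel₀ (hθ L).ne', one_smul, hsplit, sub_add_eq_sub_sub]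
    have hZ : ∀ f ∈ univ.erase L, θ f • Z f =
        θ f • y f - p f • F (y f) (y' f) (n f) + p f • F a (y f) (n f) := by
      intro f hf
      simp only [Z, if_neg (ne_of_mem_erase hf)]
      rw [hF.apply_neg, smul_sub, smul_smul, mul_div_cancel₀ _ (hθ f).ne', smul_add, smul_neg]
      abel
    rw [← add_sum_erase _ _ (mem_univ L), ← add_sum_erase _ _ (mem_univ L), hZL,
      sum_congr rfl hZ, sum_add_distrib, sum_sub_distrib]
    abel

end Flux

theorem evolved_element_average_in_invariant_set_straight_sided_general
    (M d : ℕ)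
    (G : Set (Fin M → ℝ)) (hGconv : Convex ℝ G)
    (F : (Fin M → ℝ) → (Fin M → ℝ) → (Fin d → ℝ) → (Fin M → ℝ))
    (lam : ℝ)
    -- `F` is conservative
    (hcons : ∀ a b n, F a b n = -(F b a (-n)))
    -- `F` is invariant-region-preserving for `G` with wave-speed bound `lam`
    (hIRP : ∀ a ∈ G, ∀ b ∈ G, ∀ c ∈ G, ∀ n : Fin d → ℝ, (∑ k, n k ^ 2) = 1 →
      ∀ μ : ℝ, 0 ≤ μ → μ * lam ≤ 1 / 2 →
        a - μ • (F a b n + F a c (-n)) ∈ G)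
    (nf nqs nq : ℕ)
    -- face areas and total boundary area
    (A : Fin nf → ℝ) (hA : ∀ f, 0 < A f)
    (bdry : ℝ) (hbdry : bdry = ∑ f, A f)
    -- normalized surface quadrature weights, identical on every face
    (w : Fin nqs → ℝ) (hw : ∀ l, 0 < w l)
    -- one unit normal per face, with the closure condition
    (nvec : Fin nf → (Fin d → ℝ)) (hnvec : ∀ f, (∑ k, nvec f k ^ 2) = 1)
    (hclosure : ∀ a : Fin M → ℝ, (∑ f, A f • F a a (nvec f)) = 0)
    -- interior and exterior surface states, and volume states, all in `G`
    (yin yout : Fin nf → Fin nqs → (Fin M → ℝ))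
    (hyin : ∀ f l, yin f l ∈ G) (hyout : ∀ f l, yout f l ∈ G)
    (yv : Fin nq → (Fin M → ℝ)) (hyv : ∀ v, yv v ∈ G)
    -- convex-combination coefficients
    (θv : Fin nq → ℝ) (hθv : ∀ v, 0 ≤ θv v)
    (θs : Fin nf → Fin nqs → ℝ) (hθs : ∀ f l, 0 < θs f l)
    (hsum : (∑ v, θv v) + ∑ f, ∑ l, θs f l = 1)
    (κvol Δt : ℝ) (hκ : 0 < κvol) (hΔt : 0 < Δt)
    -- the distinguished last face
    (lastF : Fin nf) (hlastF : (lastF : ℕ) = nf - 1)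
    -- CFL condition: Δt·λ/|κ| ≤ (1/2)·min{L_A, L_B}
    (hLA : ∀ (f : Fin nf) (l : Fin nqs), (f : ℕ) < nf - 1 →
      Δt * lam / κvol ≤ (1 / 2) * (θs f l / (A f * w l)))
    (hLB : ∀ l : Fin nqs,
      Δt * lam / κvol ≤ (1 / 2) * (θs lastF l / (bdry * w l)))
    -- the element average and its evolution
    (ybar ybar' : Fin M → ℝ)
    (hybar : ybar = (∑ v, θv v • yv v) + ∑ f, ∑ l, θs f l • yin f l)
    (hybar' : ybar' = ybar - (Δt / κvol) •
      ∑ f, ∑ l, (A f * w l) • F (yin f l) (yout f l) (nvec f)) :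
    ybar' ∈ G := by
  set c := Δt / κvol
  have hc : 0 < c := div_pos hΔt hκ
  have hbdry_pos : 0 < bdry := hbdry ▸ sum_pos (fun f _ => hA f) ⟨lastF, mem_univ _⟩
  have hlt : ∀ f ≠ lastF, (f : ℕ) < nf - 1 := fun f hf => by
    have := Fin.val_ne_of_ne hf
    omega
  have hnode : ∀ l, ∃ Z : Fin nf → Fin M → ℝ, (∀ f, Z f ∈ G) ∧ ∑ f, θs f l • Z f =
      ∑ f, (θs f l • yin f l - (c * (A f * w l)) • F (yin f l) (yout f l) (nvec f)) := by
    intro l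
    have htotal : ∑ f, c * (A f * w l) = c * (bdry * w l) := by rw [hbdry, sum_mul, mul_sum]
    have hp : ∀ f, 0 ≤ c * (A f * w l) := fun f => by have := hA f; have := hw l; positivity
    have hP : 0 < ∑ f, c * (A f * w l) := by rw [htotal]; have := hw l; positivity
    have hstep : ∀ f ≠ lastF, c * (A f * w l) / θs f l * lam ≤ 1 / 2 := fun f hf =>
      cfl_step_mul_le_half (mul_pos (hA f) (hw l)) (hθs f l) (hLA f l (hlt f hf))
    have hstepL : (∑ f, c * (A f * w l)) / θs lastF l * lam ≤ 1 / 2 := by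
      rw [htotal]
      exact cfl_step_mul_le_half (mul_pos hbdry_pos (hw l)) (hθs lastF l) (hLB l)
    have hclosure_node : ∑ f, (c * (A f * w l)) • F (yin lastF l) (yin lastF l) (nvec f) = 0 := by
      simp only [show ∀ f, c * (A f * w l) = (c * w l) * A f from fun f => by ring, mul_smul,
        ← smul_sum, hclosure, smul_zero]
    exact exists_smul_sum_eq_sum_sub_smul_flux hGconv hcons hIRP lastF (hyin · l) (hyout · l)
      hnvec (hθs · l) hp hP hstep hstepL hclosure_node
  choose Z hZG hZ using hnode
  have hdecomp : ybar' = ∑ v, θv v • yv v + ∑ f, ∑ l, θs f l • Z l f := by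
    calc ybar' = ∑ v, θv v • yv v +
          ∑ f, ∑ l, (θs f l • yin f l - (c * (A f * w l)) • F (yin f l) (yout f l) (nvec f)) := by
          rw [hybar', hybar]
          simp only [smul_sum, sum_sub_distrib, mul_smul]
          abel
      _ = ∑ v, θv v • yv v + ∑ l, ∑ f, θs f l • Z l f := by rw [sum_comm]; simp only [hZ]
      _ = _ := by rw [sum_comm]
  rw [hdecomp, ← Fintype.sum_prod_type']
  exact hGconv.sum_add_sum_mem hθv (fun _ => (hθs _ _).le) (by rwa [Fintype.sum_prod_type'])
    hyv fun _ => hZG _ _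

/-- The simplified CFL condition (Eq. 30) for straight-sided elements with one
constant normal per face and an identical normalized surface quadrature rule
on every face: the evolved element average remains in the invariant set `G`. -/
theorem evolved_element_average_in_invariant_set_straight_sided
    (M d : ℕ)
    (G : Set (Fin M → ℝ)) (hGconv : Convex ℝ G)
    (F : (Fin M → ℝ) → (Fin M → ℝ) → (Fin d → ℝ) → (Fin M → ℝ))
    (lam : ℝ) (hlam : 0 < lam)
    -- `F` is conservative
    (hcons : ∀ a b n, F a b n = -(F b a (-n)))
    -- `F` is invariant-region-preserving for `G` with wave-speed bound `lam`
    (hIRP : ∀ a ∈ G, ∀ b ∈ G, ∀ c ∈ G, ∀ n : Fin d → ℝ, (∑ k, n k ^ 2) = 1 →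
      ∀ μ : ℝ, 0 ≤ μ → μ * lam ≤ 1 / 2 →
        a - μ • (F a b n + F a c (-n)) ∈ G)
    (nf nqs nq : ℕ) (hnf : 1 ≤ nf) (hnqs : 1 ≤ nqs) (hnq : 1 ≤ nq)
    -- face areas and total boundary area
    (A : Fin nf → ℝ) (hA : ∀ f, 0 < A f)
    (bdry : ℝ) (hbdry : bdry = ∑ f, A f)
    -- normalized surface quadrature weights, identical on every face
    (w : Fin nqs → ℝ) (hw : ∀ l, 0 < w l) (hwsum : ∑ l, w l = 1)
    -- one unit normal per face, with the closure condition
    (nvec : Fin nf → (Fin d → ℝ)) (hnvec : ∀ f, (∑ k, nvec f k ^ 2) = 1)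
    (hclosure : ∀ a : Fin M → ℝ, (∑ f, A f • F a a (nvec f)) = 0)
    -- interior and exterior surface states, and volume states, all in `G`
    (yin yout : Fin nf → Fin nqs → (Fin M → ℝ))
    (hyin : ∀ f l, yin f l ∈ G) (hyout : ∀ f l, yout f l ∈ G)
    (yv : Fin nq → (Fin M → ℝ)) (hyv : ∀ v, yv v ∈ G)
    -- convex-combination coefficients
    (θv : Fin nq → ℝ) (hθv : ∀ v, 0 ≤ θv v)
    (θs : Fin nf → Fin nqs → ℝ) (hθs : ∀ f l, 0 < θs f l)
    (hsum : (∑ v, θv v) + ∑ f, ∑ l, θs f l = 1)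
    (κvol Δt : ℝ) (hκ : 0 < κvol) (hΔt : 0 < Δt)
    -- the distinguished last face
    (lastF : Fin nf) (hlastF : (lastF : ℕ) = nf - 1)
    -- CFL condition: Δt·λ/|κ| ≤ (1/2)·min{L_A, L_B}
    (hLA : ∀ (f : Fin nf) (l : Fin nqs), (f : ℕ) < nf - 1 →
      Δt * lam / κvol ≤ (1 / 2) * (θs f l / (A f * w l)))
    (hLB : ∀ l : Fin nqs,
      Δt * lam / κvol ≤ (1 / 2) * (θs lastF l / (bdry * w l)))
    -- the element average and its evolution
    (ybar ybar' : Fin M → ℝ)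
    (hybar : ybar = (∑ v, θv v • yv v) + ∑ f, ∑ l, θs f l • yin f l)
    (hybar' : ybar' = ybar - (Δt / κvol) •
      ∑ f, ∑ l, (A f * w l) • F (yin f l) (yout f l) (nvec f)) :
    ybar' ∈ G :=
  evolved_element_average_in_invariant_set_straight_sided_general M d G hGconv F lam hcons hIRP nf
    nqs nq A hA bdry hbdry w hw nvec hnvec hclosure yin yout hyin hyout yv hyv θv hθv θs hθs hsum
    κvol Δt hκ hΔt lastF hlastF hLA hLB ybar ybar' hybar hybar'
end

section
/- Let y = (m, E, C) be a state with C_i ≥ 0 for all i, ρ(y) > 0, and Z(y) > 0, and let ΔF = (ΔF_m, ΔF_E, ΔF_C) with ΔF_C = 0. With α*(y, ΔF) = max{α_T, 0} defined as in Lemma B.1 (via b = −ρ(y)·ΔF_E + ⟨m, ΔF_m⟩, g = −‖ΔF_m‖²/2, and α_T = (−b + √(b² − 4·Z(y)·g))/(2·Z(y)) when b² − 4·Z(y)·g ≥ 0, else α_T = 0), let β > 0 satisfy β·α*(y, ΔF) < 1. Then the state y − β·ΔF has the same concentration components (hence all ≥ 0) and the same density as y, and satisfies Z(y − β·ΔF)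 > 0. -/
open Finset

/-- Time-step constraint (Eq. 35) for the modified flux interpolation: if
`β > 0` and `β·α*(y, ΔF) < 1`, then `y − β·ΔF` has the same concentrations
and density as `y` and satisfies `Z(y − β·ΔF) > 0`. -/
theorem perturbed_state_positivity_under_beta_constraint
    (d ns : ℕ) (hd : 1 ≤ d) (hns : 1 ≤ ns)
    (W : Fin ns → ℝ) (hW : ∀ i, 0 < W i) (b0 : Fin ns → ℝ)
    (m : Fin d → ℝ) (E : ℝ) (C : Fin ns → ℝ)
    (hC : ∀ i, 0 ≤ C i)
    (hρ : 0 < density ns W C)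
    (hZ : 0 < Zfun d ns W b0 m E C)
    (ΔFm : Fin d → ℝ) (ΔFE : ℝ) (ΔFC : Fin ns → ℝ)
    (hΔFC : ΔFC = 0)
    (b g αT αstar : ℝ)
    (hb : b = -(density ns W C) * ΔFE + ∑ k, m k * ΔFm k)
    (hg : g = -(∑ k, ΔFm k ^ 2) / 2)
    (hαT : αT = if 0 ≤ b ^ 2 - 4 * Zfun d ns W b0 m E C * g then
        (-b + Real.sqrt (b ^ 2 - 4 * Zfun d ns W b0 m E C * g)) /
          (2 * Zfun d ns W b0 m E C)
      else 0)
    (hαstar : αstar = max αT 0)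
    (β : ℝ) (hβ : 0 < β) (hβα : β * αstar < 1) :
    (∀ i, C i - β * ΔFC i = C i) ∧
    density ns W (fun i => C i - β * ΔFC i) = density ns W C ∧
    0 < Zfun d ns W b0 (fun k => m k - β * ΔFm k) (E - β * ΔFE)
        (fun i => C i - β * ΔFC i) := by
  subst hΔFC
  refine ⟨fun i => by simp, by simp, ?_⟩
  set Z := Zfun d ns W b0 m E C with hZdef
  -- g ≤ 0
  have hg0 : g ≤ 0 := by
    rw [hg]
    have : (0:ℝ) ≤ ∑ k, ΔFm k ^ 2 := Finset.sum_nonneg fun k _ => sq_nonneg _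
    linarith
  have hD : 0 ≤ b ^ 2 - 4 * Z * g := by nlinarith [sq_nonneg b]
  set s := Real.sqrt (b ^ 2 - 4 * Z * g) with hsdef
  have hs0 : 0 ≤ s := Real.sqrt_nonneg _
  have hs2 : s ^ 2 = b ^ 2 - 4 * Z * g := Real.sq_sqrt hD
  rw [if_pos hD] at hαT
  have hαT0 : 0 ≤ αT := by
    rw [hαT]
    apply div_nonneg _ (by linarith)
    nlinarith
  have hαs : αstar = αT := by rw [hαstar, max_eq_left hαT0]
  rw [hαs, hαT] at hβα
  have hkey : β * (-b + s) < 2 * Z := by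
    have h2Z : 0 < 2 * Z := by linarith
    rw [← mul_div_assoc] at hβα
    exact (div_lt_one h2Z).mp hβα
  -- new Z value
  have hnewZ : Zfun d ns W b0 (fun k => m k - β * ΔFm k) (E - β * ΔFE)
      (fun i => C i - β * (0 : Fin ns → ℝ) i) = Z + β * b + β ^ 2 * g := by
    simp only [Pi.zero_apply, mul_zero, sub_zero]
    rw [hZdef]
    unfold Zfun
    rw [hb, hg]
    unfold density
    rw [show (∑ k, (m k - β * ΔFm k) ^ 2) = ∑ k, (m k ^ 2 - 2 * β * (m k * ΔFm k) + β ^ 2 * ΔFm k ^ 2) from Finset.sum_congr rfl fun k _ => by ring]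
    rw [Finset.sum_add_distrib, Finset.sum_sub_distrib, ← Finset.mul_sum, ← Finset.mul_sum]
    ring
  rw [hnewZ]
  -- from β*(-b+s) < 2Z : β*s < 2Z + β*b, both sides, square
  have h1 : β * s < 2 * Z + β * b := by nlinarith
  have h2 : 0 ≤ β * s := mul_nonneg hβ.le hs0
  nlinarith [mul_self_lt_mul_self h2 h1, sq_nonneg (β * s)]
end
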